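/- Let G=(V,E) be a finite acyclic digraph and let T ⊆ V×V be a finite set of additional edges disjoint from E. For every maximal child C=(V, E∪T') of (G,T), there exists a list L enumerating the edges of T without repetition such that the greedy insertion result of L (processing the edges of L in order and adding each edge if and only if the graph stays acyclic, starting from G) equals C. -/

import Mathlib

/-- `u` reaches `v`: there is a nonempty directed path from `u` to `v` using edges in `E`. -/
def reaches {V : Type*} (E : Set (V × V)) (u v : V) : Prop :=
  Relation.TransGen (fun a b => (a, b) ∈ E) u v

/-- A digraph (with edge set `E`) is acyclic if no vertex reaches itself. -/
def Acyclic {V : Type*} (E : Set (V × V)) : Prop := ∀ v, ¬ reaches E v v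

/-- A digraph contains a directed cycle if some vertex reaches itself. -/
def HasCycle {V : Type*} (E : Set (V × V)) : Prop := ∃ v, reaches E v v

/-- `(V, E ∪ T')` is a maximal child of `((V,E), T)`. -/
def IsMaxChild {V : Type*} (E T T' : Set (V × V)) : Prop :=
  T' ⊆ T ∧ Acyclic (E ∪ T') ∧ ∀ e ∈ T \ T', HasCycle (insert e (E ∪ T'))

open Classical in
/-- Greedy insertion: process the edges of the list in order, adding each edge
if and only if the resulting graph is still acyclic. -/
noncomputable def greedy {V : Type*} (E : Set (V × V)) : List (V × V) → Set (V × V)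
  | [] => E
  | e :: rest => greedy (if Acyclic (insert e E) then insert e E else E) rest


/-! Insert the edges of `T'` first and then those of `T \ T'`. Since `E ∪ T'` is acyclic, every
prefix of the first phase stays acyclic and all of `T'` is accepted; in the second phase each edge
closes a cycle with `E ∪ T'` by maximality, so every one of them is rejected. -/

lemma Acyclic.mono {V : Type*} {A B : Set (V × V)} (h : A ⊆ B) (hB : Acyclic B) : Acyclic A :=
  fun v hv => hB v (Relation.TransGen.mono (fun _ _ hab => h hab) v v hv)

lemma greedy_append {V : Type*} (E : Set (V × V)) (L₁ L₂ : List (V × V)) :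
    greedy E (L₁ ++ L₂) = greedy (greedy E L₁) L₂ := by
  induction L₁ generalizing E with
  | nil => rfl
  | cons e rest ih => exact ih _

lemma greedy_eq_union_of_acyclic {V : Type*} (E : Set (V × V)) (L : List (V × V))
    (h : Acyclic (E ∪ {e | e ∈ L})) : greedy E L = E ∪ {e | e ∈ L} := by
  induction L generalizing E with
  | nil => simp [greedy]
  | cons e rest ih =>
    have hsplit : E ∪ {x | x ∈ e :: rest} = insert e E ∪ {x | x ∈ rest} := by
      ext; simp only [Set.mem_union, Set.mem_insert_iff, Set.mem_ofPred_eq, List.mem_cons]; tauto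
    rw [hsplit] at h ⊢
    rw [greedy, if_pos (h.mono Set.subset_union_left), ih _ h]

lemma greedy_eq_self_of_hasCycle {V : Type*} (E : Set (V × V)) (L : List (V × V))
    (h : ∀ e ∈ L, HasCycle (insert e E)) : greedy E L = E := by
  induction L with
  | nil => rfl
  | cons e rest ih =>
    obtain ⟨v, hv⟩ := h e List.mem_cons_self
    rw [greedy, if_neg fun hacyc => hacyc v hv]
    exact ih fun e' he' => h e' (List.mem_cons_of_mem e he')

theorem stmt_9_general {V : Type*} [Fintype V]
    (E T : Set (V × V))
    (T' : Set (V × V)) (hmax : IsMaxChild E T T') :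
    ∃ L : List (V × V), L.Nodup ∧ (∀ e : V × V, e ∈ L ↔ e ∈ T) ∧
      greedy E L = E ∪ T' := by
  obtain ⟨hT'T, hacyc, hcycle⟩ := hmax
  set accepted := (Set.toFinite T').toFinset.toList
  set rejected := (Set.toFinite (T \ T')).toFinset.toList
  have hmem_accepted : {e | e ∈ accepted} = T' := by ext; simp [accepted]
  refine ⟨accepted ++ rejected, ?_, fun e => ?_, ?_⟩
  · refine (Finset.nodup_toList _).append (Finset.nodup_toList _) fun e he he' => ?_
    simp only [rejected, Finset.mem_toList, Set.Finite.mem_toFinset] at he he'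
    exact he'.2 he
  · by_cases he : e ∈ T'
    · simp [accepted, rejected, he, hT'T he]
    · simp [accepted, rejected, he]
  · rw [greedy_append, greedy_eq_union_of_acyclic E accepted (hmem_accepted ▸ hacyc),
      hmem_accepted]
    exact greedy_eq_self_of_hasCycle _ _ fun e he => hcycle e (by simpa [rejected] using he)

theorem stmt_9 {V : Type*} [Fintype V] [DecidableEq V]
    (E T : Set (V × V))
    (hEloop : ∀ e ∈ E, e.1 ≠ e.2) (hTloop : ∀ e ∈ T, e.1 ≠ e.2)
    (hdisj : Disjoint E T) (hacyc : Acyclic E)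
    (T' : Set (V × V)) (hmax : IsMaxChild E T T') :
    ∃ L : List (V × V), L.Nodup ∧ (∀ e : V × V, e ∈ L ↔ e ∈ T) ∧
      greedy E L = E ∪ T' :=
  stmt_9_general E T T' hmax
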